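/- arXiv:2110.09732 — 4 statements merged into one kernel-verified Lean document; each statement's English description precedes it below -/
import Mathlib

section
/- For any graph G and any induced subgraph H of G, the eternal domination number of G is at least the eternal domination number of H. -/
open SimpleGraph

variable {V : Type*}

/-- `D` is a dominating set of `G`. -/
def IsDomSet (G : SimpleGraph V) (D : Finset V) : Prop :=
  ∀ v : V, ∃ u ∈ D, u = v ∨ G.Adj u v

/-- A family of guard configurations closed under defending any attack: every member
of the family is a dominating set, and for every attack on an unguarded vertex `v`
some guard on a neighbour of `v` can move to `v` so that the resulting configuration
is again in the family.  The defender can perpetually defend every infinite sequence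
of attacks starting from `D` iff `D` belongs to such a family. -/
def IsEDFamily [DecidableEq V] (G : SimpleGraph V) (F : Set (Finset V)) : Prop :=
  ∀ D ∈ F, IsDomSet G D ∧
    ∀ v ∉ D, ∃ u ∈ D, G.Adj u v ∧ insert v (D.erase u) ∈ F

/-- The eternal domination number `γ∞(G)`: the least number of guards admitting a
winning defence strategy. -/
noncomputable def eternalDomNum [DecidableEq V] (G : SimpleGraph V) : ℕ :=
  sInf {k | ∃ F : Set (Finset V), F.Nonempty ∧ (∀ D ∈ F, D.card = k) ∧ IsEDFamily G F}

/-- The independence number `α(G)`. -/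
noncomputable def indepNum (G : SimpleGraph V) : ℕ :=
  sSup {k | ∃ s : Finset V, s.card = k ∧ ∀ u ∈ s, ∀ v ∈ s, ¬ G.Adj u v}

/-- The clique covering number `θ(G)`: the least `k` such that the vertex set can be
partitioned into `k` cliques, i.e. the complement of `G` is properly `k`-colourable. -/
noncomputable def cliqueCoverNum (G : SimpleGraph V) : ℕ :=
  sInf {k | Nonempty (Gᶜ.Coloring (Fin k))}

/-- The domination number `γ(G)`. -/
noncomputable def domNum (G : SimpleGraph V) : ℕ :=
  sInf {k | ∃ D : Finset V, D.card = k ∧ IsDomSet G D}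

/-!
Take a winning family `F` of `γ∞(G)`-sets for `G` and let `m` be the largest number of guards
that a configuration of `F` places inside `s`. From a configuration with exactly `m` guards in
`s`, an attack on a vertex of `s` must be answered by a guard already in `s`, since a guard
entering `s` from outside would push the count to `m + 1`. Hence the traces on `s` of the
configurations with `m` guards in `s` form a winning family of size-`m` configurations for
`G[s]`, and `γ∞(G[s]) ≤ m ≤ γ∞(G)`.
-/

open Finset

theorem isEDFamily_singleton_univ [Fintype V] [DecidableEq V] (G : SimpleGraph V) :
    IsEDFamily G {univ} := by
  rintro D rfl
  exact ⟨fun v => ⟨v, mem_univ v, Or.inl rfl⟩, fun v hv => absurd (mem_univ v) hv⟩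

theorem exists_isEDFamily_card_eq_eternalDomNum [Fintype V] [DecidableEq V]
    (G : SimpleGraph V) :
    ∃ F : Set (Finset V), F.Nonempty ∧ (∀ D ∈ F, #D = eternalDomNum G) ∧ IsEDFamily G F :=
  Nat.sInf_mem
    (s := {k | ∃ F : Set (Finset V), F.Nonempty ∧ (∀ D ∈ F, #D = k) ∧ IsEDFamily G F})
    ⟨_, {univ}, Set.singleton_nonempty _, fun _ hD => by rw [hD], isEDFamily_singleton_univ G⟩

theorem eternalDomNum_le_of_isEDFamily [DecidableEq V] {G : SimpleGraph V}
    {F : Set (Finset V)} {k : ℕ} (hne : F.Nonempty) (hcard : ∀ D ∈ F, #D = k)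
    (hF : IsEDFamily G F) : eternalDomNum G ≤ k :=
  Nat.sInf_le ⟨F, hne, hcard, hF⟩

theorem filter_insert_erase_eq [DecidableEq V] {p : V → Prop} [DecidablePred p]
    {D : Finset V} {u v : V} (hv : p v) :
    (insert v (D.erase u)).filter p = insert v ((D.filter p).erase u) := by
  rw [filter_insert, if_pos hv, filter_erase]

theorem card_filter_insert_erase [DecidableEq V] {p : V → Prop} [DecidablePred p]
    {D : Finset V} {u v : V} (hu : p u) (hv : p v) (huD : u ∈ D) (hvD : v ∉ D) :
    #((insert v (D.erase u)).filter p) = #(D.filter p) := by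
  rw [filter_insert_erase_eq hv,
    card_insert_of_notMem fun h => hvD (mem_of_mem_filter v (mem_of_mem_erase h)),
    card_erase_add_one (mem_filter.2 ⟨huD, hu⟩)]

theorem subtype_insert_erase [DecidableEq V] {p : V → Prop} [DecidablePred p]
    (D : Finset V) (u v : Subtype p) :
    (insert (v : V) (D.erase u)).subtype p = insert v ((D.subtype p).erase u) := by
  ext a
  simp only [mem_subtype, mem_insert, mem_erase, ne_eq, Subtype.ext_iff]

def inducedFamily (F : Set (Finset V)) (s : Set V) [DecidablePred (· ∈ s)] (m : ℕ) :
    Set (Finset s) :=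
  (fun D => D.subtype (· ∈ s)) '' {D ∈ F | #(D.filter (· ∈ s)) = m}

section Induce

variable {F : Set (Finset V)} {s : Set V} [DecidablePred (· ∈ s)] {m : ℕ}

theorem card_of_mem_inducedFamily {C : Finset s} (hC : C ∈ inducedFamily F s m) : #C = m := by
  obtain ⟨D, ⟨-, hD⟩, rfl⟩ := hC
  rw [card_subtype, hD]

theorem mem_of_insert_erase_mem [DecidableEq V] (hmax : ∀ D ∈ F, #(D.filter (· ∈ s)) ≤ m)
    {D : Finset V} (hD : #(D.filter (· ∈ s)) = m) {u v : V} (hv : v ∈ s) (hvD : v ∉ D)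
    (hmove : insert v (D.erase u) ∈ F) : u ∈ s := by
  by_contra hu
  have hgain : #((insert v (D.erase u)).filter (· ∈ s)) = m + 1 := by
    rw [filter_insert_erase_eq hv, erase_eq_of_notMem fun h => hu (mem_filter.1 h).2,
      card_insert_of_notMem fun h => hvD (mem_of_mem_filter v h), hD]
  have := hmax _ hmove
  omega

theorem IsEDFamily.induce [DecidableEq V] {G : SimpleGraph V} (hF : IsEDFamily G F)
    (hmax : ∀ D ∈ F, #(D.filter (· ∈ s)) ≤ m) :
    IsEDFamily (G.induce s) (inducedFamily F s m) := by
  rintro _ ⟨D, ⟨hDF, hD⟩, rfl⟩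
  have hmemD (a : s) : a ∈ D.subtype (· ∈ s) ↔ (a : V) ∈ D := mem_subtype
  have respond (v : s) (hvD : (v : V) ∉ D) :
      ∃ u : s, (u : V) ∈ D ∧ G.Adj u v ∧ insert (v : V) (D.erase u) ∈ F := by
    obtain ⟨u, huD, hadj, hmove⟩ := (hF D hDF).2 v hvD
    exact ⟨⟨u, mem_of_insert_erase_mem hmax hD v.2 hvD hmove⟩, huD, hadj, hmove⟩
  refine ⟨fun v => ?_, fun v hv => ?_⟩
  · by_cases hvD : (v : V) ∈ D
    · exact ⟨v, (hmemD v).2 hvD, Or.inl rfl⟩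
    · obtain ⟨u, huD, hadj, -⟩ := respond v hvD
      exact ⟨u, (hmemD u).2 huD, Or.inr hadj⟩
  · have hvD : (v : V) ∉ D := fun h => hv ((hmemD v).2 h)
    obtain ⟨u, huD, hadj, hmove⟩ := respond v hvD
    refine ⟨u, (hmemD u).2 huD, hadj, insert (v : V) (D.erase u), ⟨hmove, ?_⟩,
      subtype_insert_erase D u v⟩
    rw [card_filter_insert_erase u.2 v.2 huD hvD, hD]

end Induce

/-- For any graph `G` and any induced subgraph `H` of `G` (induced on a vertex
subset `s`), the eternal domination number of `G` is at least that of `H`. -/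
theorem eternalDomNum_induce_le {V : Type*} [Fintype V] [DecidableEq V]
    (G : SimpleGraph V) (s : Set V) :
    eternalDomNum (G.induce s) ≤ eternalDomNum G := by
  classical
  obtain ⟨F, hne, hcard, hF⟩ := exists_isEDFamily_card_eq_eternalDomNum G
  obtain ⟨D₀, hD₀F, hmax⟩ :=
    Set.exists_max_image F (fun D => #(D.filter (· ∈ s))) F.toFinite hne
  calc eternalDomNum (G.induce s)
      ≤ #(D₀.filter (· ∈ s)) :=
        eternalDomNum_le_of_isEDFamily (F := inducedFamily F s _)
          ⟨_, D₀, ⟨hD₀F, rfl⟩, rfl⟩ (fun _ => card_of_mem_inducedFamily)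
          (hF.induce hmax)
    _ ≤ #D₀ := card_filter_le _ _
    _ = eternalDomNum G := hcard D₀ hD₀F
end

section
/- For any finite graph G, the independence number of G is at most the eternal domination number of G, which in turn is at most the clique covering number of G. -/
open SimpleGraph

variable {V : Type*}

/-!
An independent set `A` can always be absorbed into the guard configuration: when a vertex of
`A` is attacked, the defending guard comes from a neighbour, which lies outside `A`, so the
guards already standing on `A` stay put. Hence every eternal dominating family contains a
configuration with at least `α(G)` guards.

Conversely, given a partition of the vertices into cliques, keeping exactly one guard in every
clique is a winning strategy: the guard of the clique containing the attacked vertex moves there.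
-/

open Finset

section IndependentSets

variable [DecidableEq V] {G : SimpleGraph V} {F : Set (Finset V)}

theorem IsEDFamily.exists_superset_of_isIndepSet (hF : IsEDFamily G F) (hne : F.Nonempty)
    {A : Finset V} (hA : G.IsIndepSet A) : ∃ D ∈ F, A ⊆ D := by
  induction A using Finset.induction_on with
  | empty => exact hne.imp fun D hD => ⟨hD, empty_subset D⟩
  | insert a A _ ih =>
    rw [coe_insert] at hA
    obtain ⟨D, hD, hAD⟩ := ih (hA.mono (Set.subset_insert a _))
    by_cases haD : a ∈ D
    · exact ⟨D, hD, insert_subset haD hAD⟩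
    obtain ⟨u, -, hua, hD'⟩ := (hF D hD).2 a haD
    have huA : u ∉ A := fun huA =>
      hA (Set.mem_insert_of_mem a huA) (Set.mem_insert a _) hua.ne hua
    refine ⟨_, hD', insert_subset_insert a fun w hw => mem_erase.2 ⟨?_, hAD hw⟩⟩
    rintro rfl
    exact huA hw

theorem indepNum_le_of_isEDFamily {k : ℕ} (hF : IsEDFamily G F) (hne : F.Nonempty)
    (hk : ∀ D ∈ F, D.card = k) : _root_.indepNum G ≤ k := by
  refine csSup_le ⟨0, ∅, card_empty, by simp⟩ ?_
  rintro _ ⟨A, rfl, hA⟩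
  obtain ⟨D, hD, hAD⟩ := hF.exists_superset_of_isIndepSet hne fun u hu v hv _ => hA u hu v hv
  exact hk D hD ▸ card_le_card hAD

end IndependentSets

namespace SimpleGraph.Coloring

variable {G : SimpleGraph V} {α : Type*} (C : Gᶜ.Coloring α)

theorem adj_of_compl {u v : V} (hne : u ≠ v) (h : C u = C v) : G.Adj u v :=
  not_not.1 fun hadj => C.valid ((G.compl_adj u v).2 ⟨hne, hadj⟩) h

variable [Fintype V] [DecidableEq α]

def transversals : Set (Finset V) :=
  {D | Set.InjOn C D ∧ D.image C = univ.image C}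

theorem transversals_nonempty : C.transversals.Nonempty := by
  obtain ⟨D, -, hinj, himage⟩ :=
    exists_subset_injOn_image_eq_of_surjOn (f := C) Set.univ (univ.image C) (by simp [Set.SurjOn])
  exact ⟨D, hinj, himage⟩

theorem card_of_mem_transversals {D : Finset V} (hD : D ∈ C.transversals) :
    D.card = (univ.image C).card := by
  rw [← hD.2, card_image_of_injOn hD.1]

theorem exists_mem_color_eq {D : Finset V} (hD : D ∈ C.transversals) (v : V) :
    ∃ u ∈ D, C u = C v := by
  have hv : C v ∈ D.image C := hD.2 ▸ mem_image_of_mem C (mem_univ v)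
  simpa using hv

variable [DecidableEq V]

theorem insert_erase_mem_transversals {D : Finset V} (hD : D ∈ C.transversals)
    {u v : V} (hu : u ∈ D) (hv : v ∉ D) (huv : C u = C v) :
    insert v (D.erase u) ∈ C.transversals := by
  have hv' : v ∉ D.erase u := fun h => hv (mem_of_mem_erase h)
  constructor
  · rw [coe_insert, Set.injOn_insert hv']
    refine ⟨hD.1.mono (coe_subset.2 (erase_subset u D)), ?_⟩
    rintro ⟨w, hw, hwv⟩
    rw [mem_coe, mem_erase] at hw
    exact hw.1 (hD.1 (mem_coe.2 hw.2) (mem_coe.2 hu) (hwv.trans huv.symm))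
  · rw [image_insert, ← huv, ← image_insert, insert_erase hu, hD.2]

theorem isEDFamily_transversals : IsEDFamily G C.transversals := by
  intro D hD
  refine ⟨fun v => ?_, fun v hv => ?_⟩
  · obtain ⟨u, hu, huv⟩ := C.exists_mem_color_eq hD v
    exact ⟨u, hu, or_iff_not_imp_left.2 fun hne => C.adj_of_compl hne huv⟩
  · obtain ⟨u, hu, huv⟩ := C.exists_mem_color_eq hD v
    have hne : u ≠ v := fun h => hv (h ▸ hu)
    exact ⟨u, hu, C.adj_of_compl hne huv, C.insert_erase_mem_transversals hD hu hv huv⟩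

theorem card_image_mem_eternalDomSizes :
    (univ.image C).card ∈
      {k | ∃ F : Set (Finset V), F.Nonempty ∧ (∀ D ∈ F, D.card = k) ∧ IsEDFamily G F} :=
  ⟨C.transversals, C.transversals_nonempty, fun _ => C.card_of_mem_transversals,
    C.isEDFamily_transversals⟩

end SimpleGraph.Coloring

theorem eternalDomNum_le_of_colorable_compl [Fintype V] [DecidableEq V] {G : SimpleGraph V}
    {n : ℕ} (h : Gᶜ.Colorable n) : eternalDomNum G ≤ n := by
  obtain ⟨C⟩ := h
  calc eternalDomNum G ≤ (univ.image C).card := Nat.sInf_le C.card_image_mem_eternalDomSizes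
    _ ≤ n := card_le_univ _ |>.trans_eq (Fintype.card_fin n)

/-- For any finite graph `G`, `α(G) ≤ γ∞(G) ≤ θ(G)`. -/
theorem indepNum_le_eternalDomNum_le_cliqueCoverNum {V : Type*} [Fintype V] [DecidableEq V]
    (G : SimpleGraph V) :
    _root_.indepNum G ≤ eternalDomNum G ∧ eternalDomNum G ≤ cliqueCoverNum G := by
  constructor
  -- the set of winning guard numbers is nonempty: guard every vertex
  · exact le_csInf ⟨_, Gᶜ.selfColoring.card_image_mem_eternalDomSizes⟩
      fun k ⟨F, hne, hk, hF⟩ => indepNum_le_of_isEDFamily hF hne hk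
  · exact eternalDomNum_le_of_colorable_compl <|
      Nat.sInf_mem (s := {k | Gᶜ.Colorable k}) ⟨Fintype.card V, Gᶜ.colorable_of_fintype⟩
end

section
/- For any finite graph G with independence number α, the eternal domination number of G is at most α(α+1)/2 (the binomial coefficient C(α+1, 2)). -/
open SimpleGraph

variable {V : Type*}

/-!
Arrange the guards on `W` in disjoint independent layers of sizes `0, 1, …, c - 1`, where every
independent subset of `W` has fewer than `c` vertices; such a configuration has `C(c, 2)` guards.
The top layer is then a maximal independent set of `W`, so every unguarded vertex has a guard
neighbour. When `v` is attacked, take a guard `u` adjacent to `v` in the lowest possible layer,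
say of level `k + 1`: the guard on `u` moves to `v`, the layer of level `k` together with `v`
becomes the new layer of level `k + 1` (it stays independent by the choice of `k`), and the old
layer of level `k + 1` without `u` becomes the new layer of level `k`.

If `W` admits no full layering, keep guards fixed on a longest run of top layers of levels
`j + 1, …, c - 1`; by maximality the rest of `W` has no independent set of size `j`, and induction
on `c` defends it with at most `C(j, 2)` further guards.
-/

open Finset

lemma sum_range_id_eq_choose_two (n : ℕ) : ∑ i ∈ range n, i = n.choose 2 := by
  rw [sum_range_id, Nat.choose_two_right]

lemma sum_Ico_add_choose_two_le {j c : ℕ} (h : j < c) :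
    ∑ i ∈ Ico (j + 1) c, i + j.choose 2 ≤ c.choose 2 := by
  rw [← sum_range_id_eq_choose_two c, ← sum_range_add_sum_Ico (m := j + 1) _ h,
    sum_range_id_eq_choose_two]
  have := Nat.choose_le_choose 2 (Nat.le_add_right j 1)
  omega

namespace SimpleGraph

variable {G : SimpleGraph V}

lemma isIndepSet_insert_of_forall_not_adj {s : Set V} {v : V} (hs : G.IsIndepSet s)
    (h : ∀ x ∈ s, ¬G.Adj x v) : G.IsIndepSet (insert v s) :=
  hs.insert fun x hx _ => ⟨fun hvx => h x hx hvx.symm, h x hx⟩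

end SimpleGraph

section

variable {G : SimpleGraph V}

lemma card_le_indepNum_of_isIndepSet [Fintype V] {s : Finset V}
    (hs : G.IsIndepSet (s : Set V)) : #s ≤ _root_.indepNum G :=
  le_csSup ⟨Fintype.card V, by rintro _ ⟨t, rfl, -⟩; exact card_le_univ t⟩
    ⟨s, rfl, fun u hu v hv => by
      obtain rfl | huv := eq_or_ne u v
      exacts [G.irrefl, hs hu hv huv]⟩

variable (G) in
/-- The guards `D ⊆ W` split into independent layers of the sizes `i ∈ L`; recording the layers by
a level map `ℓ` makes them disjoint for free. -/
structure IsLayering (W : Finset V) (L : Finset ℕ) (D : Finset V) (ℓ : V → ℕ) : Prop where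
  subset : D ⊆ W
  mem_levels : ∀ x ∈ D, ℓ x ∈ L
  layer : ∀ i ∈ L, G.IsIndepSet ↑{x ∈ D | ℓ x = i} ∧ #{x ∈ D | ℓ x = i} = i

variable {W D : Finset V} {L : Finset ℕ} {ℓ : V → ℕ}

lemma IsLayering.card_eq (h : IsLayering G W L D ℓ) : #D = ∑ i ∈ L, i := by
  rw [card_eq_sum_card_fiberwise h.mem_levels]
  exact sum_congr rfl fun i hi => (h.layer i hi).2

variable [DecidableEq V]

lemma IsLayering.exists_adj_of_notMem (h : IsLayering G W L D ℓ) {i : ℕ} (hi : i ∈ L)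
    (hW : ∀ s ⊆ W, G.IsIndepSet (s : Set V) → #s ≤ i) {v : V} (hv : v ∈ W) (hvD : v ∉ D) :
    ∃ u ∈ D, ℓ u = i ∧ G.Adj u v := by
  by_contra! hnadj
  obtain ⟨hindep, hcard⟩ := h.layer i hi
  have hvi : v ∉ {x ∈ D | ℓ x = i} := fun hv' => hvD (mem_filter.1 hv').1
  have hindep' : G.IsIndepSet ↑(insert v {x ∈ D | ℓ x = i}) := by
    rw [coe_insert]
    refine isIndepSet_insert_of_forall_not_adj hindep fun x hx => ?_
    rw [mem_coe, mem_filter] at hx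
    exact hnadj x hx.1 hx.2
  have := hW _ (insert_subset hv ((filter_subset _ _).trans h.subset)) hindep'
  rw [card_insert_of_notMem hvi, hcard] at this
  omega

lemma IsLayering.insert_erase (h : IsLayering G W L D ℓ) {k : ℕ} (hk : k ∈ L) {u v : V}
    (hu : u ∈ D) (hℓu : ℓ u = k + 1) (hv : v ∈ W) (hvD : v ∉ D)
    (hnadj : ∀ x ∈ D, ℓ x = k → ¬G.Adj x v) :
    IsLayering G W L (insert v (D.erase u))
      (fun x => if x = v then k + 1 else Equiv.swap k (k + 1) (ℓ x)) := by
  have hk1 : k + 1 ∈ L := hℓu ▸ h.mem_levels u hu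
  have hlayer (i : ℕ) :
      {x ∈ insert v (D.erase u) | (if x = v then k + 1 else Equiv.swap k (k + 1) (ℓ x)) = i} =
        if i = k + 1 then insert v {x ∈ D | ℓ x = k}
        else {x ∈ D | ℓ x = Equiv.swap k (k + 1) i}.erase u := by
    have hD : {x ∈ D | (if x = v then k + 1 else Equiv.swap k (k + 1) (ℓ x)) = i} =
        {x ∈ D | ℓ x = Equiv.swap k (k + 1) i} := filter_congr fun x hx => by
      rw [if_neg (ne_of_mem_of_not_mem hx hvD), Equiv.swap_apply_eq_iff]
    rw [filter_insert, filter_erase, hD]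
    by_cases hi : i = k + 1
    · rw [if_pos (by simp [hi]), if_pos hi, hi, Equiv.swap_apply_right,
        erase_eq_of_notMem (by simp [hℓu])]
    · rw [if_neg (by simpa [eq_comm] using hi), if_neg hi]
  refine ⟨insert_subset hv ((erase_subset _ _).trans h.subset), ?_, fun i hi => ?_⟩
  · intro x hx
    obtain rfl | hx := mem_insert.1 hx
    · simpa using hk1
    · have hxv : x ≠ v := fun hxv => hvD (hxv ▸ (mem_erase.1 hx).2)
      have := h.mem_levels x (mem_erase.1 hx).2
      simp only [hxv, if_false, Equiv.swap_apply_def]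
      split_ifs <;> simp_all
  · rw [hlayer]
    split_ifs with hik
    · obtain ⟨hindep, hcard⟩ := h.layer k hk
      refine ⟨?_, ?_⟩
      · rw [coe_insert]
        exact isIndepSet_insert_of_forall_not_adj hindep fun x hx =>
          hnadj x (mem_filter.1 hx).1 (mem_filter.1 hx).2
      · rw [card_insert_of_notMem fun hv' => hvD (mem_filter.1 hv').1, hcard, hik]
    · by_cases hik' : i = k
      · subst hik'
        obtain ⟨hindep, hcard⟩ := h.layer (i + 1) hk1
        rw [Equiv.swap_apply_left, card_erase_of_mem (by simp [hu, hℓu]), hcard]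
        exact ⟨hindep.mono (coe_subset.2 (erase_subset _ _)), rfl⟩
      · obtain ⟨hindep, hcard⟩ := h.layer i hi
        rw [Equiv.swap_apply_of_ne_of_ne hik' hik,
          erase_eq_of_notMem (by simp [hℓu, Ne.symm hik])]
        exact ⟨hindep, hcard⟩

lemma IsLayering.union (h : IsLayering G W L D ℓ) {j : ℕ} (hj : j ∉ L) {t : Finset V}
    (ht : t ⊆ W \ D) (hti : G.IsIndepSet (t : Set V)) (htc : #t = j) :
    IsLayering G W (insert j L) (D ∪ t) (fun x => if x ∈ t then j else ℓ x) := by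
  have htD : Disjoint D t := disjoint_sdiff.mono_right ht
  have hlayer (i : ℕ) : {x ∈ D ∪ t | (if x ∈ t then j else ℓ x) = i} =
      if i = j then t else {x ∈ D | ℓ x = i} := by
    ext x
    by_cases hxt : x ∈ t
    · have hxD : x ∉ D := disjoint_right.1 htD hxt
      split_ifs <;> simp [hxt, hxD] <;> omega
    · by_cases hxD : x ∈ D
      · have : ℓ x ≠ j := fun h' => hj (h' ▸ h.mem_levels x hxD)
        split_ifs with hij <;> simp [hxt, hxD, hij, this]
      · split_ifs <;> simp [hxt, hxD]
  refine ⟨union_subset h.subset (ht.trans sdiff_subset), fun x hx => ?_, fun i hi => ?_⟩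
  · by_cases hxt : x ∈ t
    · simp [hxt]
    · simp only [hxt, if_false]
      exact mem_insert_of_mem (h.mem_levels x ((mem_union.1 hx).resolve_right hxt))
  · rw [hlayer]
    split_ifs with hij
    · exact ⟨hti, htc.trans hij.symm⟩
    · exact h.layer i (mem_of_mem_insert_of_ne hi hij)

lemma IsLayering.card_lt_of_subset_sdiff {j c : ℕ} (h : IsLayering G W (Ico (j + 1) c) D ℓ)
    (hjc : j < c) (hmax : ∀ D' ℓ', ¬IsLayering G W (Ico j c) D' ℓ') {s : Finset V}
    (hs : s ⊆ W \ D) (hsi : G.IsIndepSet (s : Set V)) : #s < j := by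
  by_contra! hjs
  obtain ⟨t, hts, htc⟩ := exists_subset_card_eq hjs
  refine hmax (D ∪ t) (fun x => if x ∈ t then j else ℓ x) ?_
  rw [← insert_Ico_add_one_left_eq_Ico hjc]
  exact h.union (by simp) (hts.trans hs) (hsi.mono (coe_subset.2 hts)) htc

variable (G) in
/-- `IsEDFamily` for the subgraph of `G` induced on `W`. -/
def IsEDFamilyOn (W : Finset V) (F : Set (Finset V)) : Prop :=
  ∀ D ∈ F, D ⊆ W ∧ (∀ v ∈ W, ∃ u ∈ D, u = v ∨ G.Adj u v) ∧
    ∀ v ∈ W, v ∉ D → ∃ u ∈ D, G.Adj u v ∧ insert v (D.erase u) ∈ F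

variable (G) in
def HasEDFamilyOn (W : Finset V) (k : ℕ) : Prop :=
  ∃ F : Set (Finset V), F.Nonempty ∧ (∀ D ∈ F, #D = k) ∧ IsEDFamilyOn G W F

lemma HasEDFamilyOn.eternalDomNum_le [Fintype V] {k : ℕ} (h : HasEDFamilyOn G univ k) :
    eternalDomNum G ≤ k := by
  obtain ⟨F, hne, hcard, hF⟩ := h
  refine Nat.sInf_le ⟨F, hne, hcard, fun D hD => ?_⟩
  exact ⟨fun v => (hF D hD).2.1 v (mem_univ v), fun v => (hF D hD).2.2 v (mem_univ v)⟩

lemma IsEDFamilyOn.image_union {S : Finset V} {F : Set (Finset V)} (hS : S ⊆ W)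
    (h : IsEDFamilyOn G (W \ S) F) : IsEDFamilyOn G W ((S ∪ ·) '' F) := by
  rintro _ ⟨D, hD, rfl⟩
  obtain ⟨hDW, hdom, hdef⟩ := h D hD
  refine ⟨union_subset hS (hDW.trans sdiff_subset), fun v hv => ?_, fun v hv hvD => ?_⟩
  · by_cases hvS : v ∈ S
    · exact ⟨v, mem_union_left _ hvS, .inl rfl⟩
    · obtain ⟨u, hu, huv⟩ := hdom v (mem_sdiff.2 ⟨hv, hvS⟩)
      exact ⟨u, mem_union_right _ hu, huv⟩
  · rw [mem_union, not_or] at hvD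
    obtain ⟨u, hu, hadj, hmem⟩ := hdef v (mem_sdiff.2 ⟨hv, hvD.1⟩) hvD.2
    have huS : u ∉ S := (mem_sdiff.1 (hDW hu)).2
    refine ⟨u, mem_union_right _ hu, hadj, insert v (D.erase u), hmem, ?_⟩
    change S ∪ insert v (D.erase u) = insert v ((S ∪ D).erase u)
    rw [erase_union_distrib, erase_eq_of_notMem huS, union_insert]

lemma HasEDFamilyOn.union {S : Finset V} {k : ℕ} (hS : S ⊆ W)
    (h : HasEDFamilyOn G (W \ S) k) : HasEDFamilyOn G W (#S + k) := by
  obtain ⟨F, ⟨D, hD⟩, hcard, hF⟩ := h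
  refine ⟨(S ∪ ·) '' F, ⟨S ∪ D, D, hD, rfl⟩, ?_, hF.image_union hS⟩
  rintro _ ⟨D', hD', rfl⟩
  rw [card_union_of_disjoint (disjoint_sdiff.mono_right (hF D' hD').1), hcard D' hD']

lemma isEDFamilyOn_setOf_isLayering {c : ℕ}
    (hW : ∀ s ⊆ W, G.IsIndepSet (s : Set V) → #s < c) :
    IsEDFamilyOn G W {D | ∃ ℓ, IsLayering G W (range c) D ℓ} := by
  obtain ⟨b, rfl⟩ : ∃ b, c = b + 1 :=
    Nat.exists_eq_add_one.2 (hW ∅ (empty_subset _) (by simp))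
  replace hW : ∀ s ⊆ W, G.IsIndepSet (s : Set V) → #s ≤ b := fun s hs hsi =>
    Nat.lt_succ_iff.1 (hW s hs hsi)
  have hb : b ∈ range (b + 1) := self_mem_range_succ b
  rintro D ⟨ℓ, hD⟩
  refine ⟨hD.subset, fun v hv => ?_, fun v hv hvD => ?_⟩
  · by_cases hvD : v ∈ D
    · exact ⟨v, hvD, .inl rfl⟩
    · obtain ⟨u, hu, -, hadj⟩ := hD.exists_adj_of_notMem hb hW hv hvD
      exact ⟨u, hu, .inr hadj⟩
  classical
  have htop := hD.exists_adj_of_notMem hb hW hv hvD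
  have hex : ∃ m, ∃ u ∈ D, ℓ u = m ∧ G.Adj u v := ⟨b, htop⟩
  obtain ⟨u, hu, hℓu, hadj⟩ := Nat.find_spec hex
  obtain ⟨k, hk⟩ : ∃ k, Nat.find hex = k + 1 := by
    refine Nat.exists_eq_add_one.2 (Nat.pos_of_ne_zero fun h0 => ?_)
    have hempty := (hD.layer 0 (by simp)).2
    rw [card_eq_zero, filter_eq_empty_iff] at hempty
    exact hempty hu (hℓu.trans h0)
  have hkb : k + 1 ≤ b := hk ▸ Nat.find_min' hex htop
  have hnadj : ∀ x ∈ D, ℓ x = k → ¬G.Adj x v := fun x hx hℓx hadj =>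
    Nat.find_min hex (hk ▸ k.lt_succ_self) ⟨x, hx, hℓx, hadj⟩
  exact ⟨u, hu, hadj, _,
    hD.insert_erase (mem_range.2 (by omega)) hu (hℓu.trans hk) hv hvD hnadj⟩

lemma IsLayering.hasEDFamilyOn {c : ℕ} (hW : ∀ s ⊆ W, G.IsIndepSet (s : Set V) → #s < c)
    (h : IsLayering G W (range c) D ℓ) : HasEDFamilyOn G W (c.choose 2) := by
  refine ⟨{D | ∃ ℓ, IsLayering G W (range c) D ℓ}, ⟨D, ℓ, h⟩, ?_,
    isEDFamilyOn_setOf_isLayering hW⟩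
  rintro _ ⟨_, h'⟩
  exact h'.card_eq.trans (sum_range_id_eq_choose_two c)

theorem exists_hasEDFamilyOn_le_choose_two (c : ℕ) (W : Finset V)
    (hW : ∀ s ⊆ W, G.IsIndepSet (s : Set V) → #s < c) :
    ∃ k ≤ c.choose 2, HasEDFamilyOn G W k := by
  induction c using Nat.strong_induction_on generalizing W with
  | _ c ih =>
  classical
  have htop : ∃ D ℓ, IsLayering G W (Ico c c) D ℓ :=
    ⟨∅, fun _ => 0, by simp [IsLayering.mk]⟩
  have hex : ∃ j, ∃ D ℓ, IsLayering G W (Ico j c) D ℓ := ⟨c, htop⟩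
  obtain ⟨D, ℓ, hD⟩ := Nat.find_spec hex
  cases hj : Nat.find hex with
  | zero =>
    rw [hj, Nat.Ico_zero_eq_range] at hD
    exact ⟨_, le_rfl, hD.hasEDFamilyOn hW⟩
  | succ j =>
    rw [hj] at hD
    have hjc : j < c := by simpa [hj] using Nat.find_min' hex htop
    have hmax : ∀ D' ℓ', ¬IsLayering G W (Ico j c) D' ℓ' := fun D' ℓ' hD' =>
      Nat.find_min hex (hj ▸ j.lt_succ_self) ⟨D', ℓ', hD'⟩
    obtain ⟨k, hk, hF⟩ :=
      ih j hjc (W \ D) fun s hs hsi => hD.card_lt_of_subset_sdiff hjc hmax hs hsi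
    refine ⟨#D + k, ?_, hF.union hD.subset⟩
    have := sum_Ico_add_choose_two_le hjc
    rw [hD.card_eq]
    omega

end

/-- For any finite graph `G`, `γ∞(G) ≤ C(α(G)+1, 2)`. -/
theorem eternalDomNum_le_choose {V : Type*} [Fintype V] [DecidableEq V]
    (G : SimpleGraph V) :
    eternalDomNum G ≤ (_root_.indepNum G + 1).choose 2 := by
  obtain ⟨k, hk, hF⟩ := exists_hasEDFamilyOn_le_choose_two
    (_root_.indepNum G + 1) univ fun _ _ hs => Nat.lt_succ_of_le (card_le_indepNum_of_isIndepSet hs)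
  exact hF.eternalDomNum_le.trans hk
end

section
/- For every integer k ≥ 2, there exists a graph G with γ(G) = γ∞(G) = k that contains a minimum dominating set which is not an eternal dominating set. -/
open SimpleGraph

variable {V : Type*}

/-- `D` is an eternal dominating set of `G`: guards placed on `D` can defend every
infinite sequence of attacks. -/
def IsEternalDomSet [DecidableEq V] (G : SimpleGraph V) (D : Finset V) : Prop :=
  ∃ F : Set (Finset V), IsEDFamily G F ∧ D ∈ F ∧ ∀ D' ∈ F, D'.card = D.card
/-! In the house graph every dominating set has at least two vertices, and the six dominating
pairs other than `{u₁, u₄}` form a family closed under defending attacks, so `γ = γ∞ = 2`.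
The pair `{u₁, u₄}` dominates, but an attack on `u₀` must be answered from `u₁` or `u₄`,
leaving `u₃` or `u₂` undominated. Instead of pendant paths we add `k - 2` isolated vertices:
each of them carries a guard in every dominating set, and these guards never move, so both
parameters grow by exactly `k - 2`. -/

open Finset

section DominationNumbers

variable {G : SimpleGraph V} {D : Finset V}

lemma domNum_eq_card (hD : IsDomSet G D) (hmin : ∀ D', IsDomSet G D' → D.card ≤ D'.card) :
    domNum G = D.card :=
  le_antisymm (Nat.sInf_le ⟨D, rfl, hD⟩) <| le_csInf ⟨_, D, rfl, hD⟩ <| by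
    rintro _ ⟨D', rfl, hD'⟩
    exact hmin D' hD'

lemma eternalDomNum_eq_card [DecidableEq V] {F : Set (Finset V)} (hF : IsEDFamily G F)
    (hD : D ∈ F) (hcard : ∀ D' ∈ F, D'.card = D.card)
    (hmin : ∀ D', IsDomSet G D' → D.card ≤ D'.card) : eternalDomNum G = D.card :=
  le_antisymm (Nat.sInf_le ⟨F, ⟨D, hD⟩, hcard, hF⟩) <|
    le_csInf ⟨_, F, ⟨D, hD⟩, hcard, hF⟩ <| by
      rintro _ ⟨F', ⟨D', hD'⟩, hcard', hF'⟩
      exact hcard' D' hD' ▸ hmin D' (hF' D' hD').1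

def IsUndefendableAttack [DecidableEq V] (G : SimpleGraph V) (D : Finset V) (v : V) : Prop :=
  v ∉ D ∧ ∀ u ∈ D, G.Adj u v → ¬IsDomSet G (insert v (D.erase u))

lemma IsUndefendableAttack.not_isEternalDomSet [DecidableEq V] {v : V}
    (h : IsUndefendableAttack G D v) : ¬IsEternalDomSet G D := by
  rintro ⟨F, hF, hD, -⟩
  obtain ⟨u, hu, hadj, hnew⟩ := (hF D hD).2 v h.1
  exact h.2 u hu hadj (hF _ hnew).1

end DominationNumbers

section IsolatedVertices

variable {W : Type*} [Fintype V] [Fintype W] [DecidableEq W] (f : V ↪ W)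

/-- The vertices of `W` outside the range of `f` are isolated in `G.map f`; every dominating set
of `G.map f` guards all of them. -/
def mapUnionCompl (D : Finset V) : Finset W := D.map f ∪ (univ.map f)ᶜ

variable {f}

@[simp]
lemma apply_mem_mapUnionCompl {D : Finset V} {v : V} : f v ∈ mapUnionCompl f D ↔ v ∈ D := by
  simp [mapUnionCompl]

lemma mem_mapUnionCompl_of_notMem_range {D : Finset V} {w : W} (hw : w ∉ Set.range f) :
    w ∈ mapUnionCompl f D := by
  simp_all [mapUnionCompl]

lemma card_mapUnionCompl (D : Finset V) :
    (mapUnionCompl f D).card = D.card + (Fintype.card W - Fintype.card V) := by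
  have hdisj : Disjoint (D.map f) (univ.map f)ᶜ :=
    disjoint_compl_right.mono_left (map_subset_map.2 (subset_univ D))
  rw [mapUnionCompl, card_union_of_disjoint hdisj, card_map, card_compl, card_map, card_univ]

lemma insert_erase_mapUnionCompl [DecidableEq V] (D : Finset V) (u v : V) :
    insert (f v) ((mapUnionCompl f D).erase (f u)) = mapUnionCompl f (insert v (D.erase u)) := by
  ext w
  by_cases hw : w ∈ Set.range f
  · obtain ⟨x, rfl⟩ := hw
    simp [f.injective.eq_iff]
  · have hv : w ≠ f v := fun h => hw ⟨v, h.symm⟩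
    have hu : w ≠ f u := fun h => hw ⟨u, h.symm⟩
    simp [hv, hu, mem_mapUnionCompl_of_notMem_range hw]

variable {G : SimpleGraph V}

lemma isDomSet_map_mapUnionCompl_iff {D : Finset V} :
    IsDomSet (G.map f) (mapUnionCompl f D) ↔ IsDomSet G D := by
  constructor
  · intro hD v
    obtain ⟨u, hu, huv | huv⟩ := hD (f v)
    · obtain rfl := huv
      exact ⟨v, apply_mem_mapUnionCompl.1 hu, Or.inl rfl⟩
    · obtain ⟨u', v', hadj, rfl, hv'⟩ := (map_adj _ _ _ _).1 huv
      obtain rfl := f.injective hv'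
      exact ⟨u', apply_mem_mapUnionCompl.1 hu, Or.inr hadj⟩
  · intro hD w
    by_cases hw : w ∈ Set.range f
    · obtain ⟨v, rfl⟩ := hw
      obtain ⟨u, hu, huv | huv⟩ := hD v
      · exact ⟨f u, apply_mem_mapUnionCompl.2 hu, Or.inl (congrArg f huv)⟩
      · exact ⟨f u, apply_mem_mapUnionCompl.2 hu, Or.inr (map_adj_apply.2 huv)⟩
    · exact ⟨w, mem_mapUnionCompl_of_notMem_range hw, Or.inl rfl⟩

lemma IsDomSet.exists_eq_mapUnionCompl {D : Finset W} (hD : IsDomSet (G.map f) D) :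
    ∃ D₀, IsDomSet G D₀ ∧ D = mapUnionCompl f D₀ := by
  have hD₀ : D = mapUnionCompl f (D.preimage f f.injective.injOn) := by
    ext w
    by_cases hw : w ∈ Set.range f
    · obtain ⟨v, rfl⟩ := hw
      simp
    · simp only [mem_mapUnionCompl_of_notMem_range hw, iff_true]
      obtain ⟨u, hu, rfl | huw⟩ := hD w
      · exact hu
      · obtain ⟨_, v, -, -, rfl⟩ := (map_adj _ _ _ _).1 huw
        exact absurd ⟨v, rfl⟩ hw
  exact ⟨_, isDomSet_map_mapUnionCompl_iff.1 (hD₀ ▸ hD), hD₀⟩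

lemma le_card_of_isDomSet_map {c : ℕ} (hmin : ∀ D, IsDomSet G D → c ≤ D.card) {D : Finset W}
    (hD : IsDomSet (G.map f) D) : c + (Fintype.card W - Fintype.card V) ≤ D.card := by
  obtain ⟨D₀, hD₀, rfl⟩ := hD.exists_eq_mapUnionCompl
  rw [card_mapUnionCompl]
  exact Nat.add_le_add_right (hmin D₀ hD₀) _

lemma IsEDFamily.image_mapUnionCompl [DecidableEq V] {F : Set (Finset V)} (hF : IsEDFamily G F) :
    IsEDFamily (G.map f) (mapUnionCompl f '' F) := by
  rintro _ ⟨D, hD, rfl⟩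
  obtain ⟨hdom, hdef⟩ := hF D hD
  refine ⟨isDomSet_map_mapUnionCompl_iff.2 hdom, fun w hw => ?_⟩
  obtain ⟨v, rfl⟩ : w ∈ Set.range f := by
    by_contra h
    exact hw (mem_mapUnionCompl_of_notMem_range h)
  obtain ⟨u, hu, hadj, hnew⟩ := hdef v (by simpa using hw)
  refine ⟨f u, apply_mem_mapUnionCompl.2 hu, map_adj_apply.2 hadj, ?_⟩
  rw [insert_erase_mapUnionCompl]
  exact Set.mem_image_of_mem _ hnew

lemma IsUndefendableAttack.map [DecidableEq V] {D : Finset V} {v : V}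
    (h : IsUndefendableAttack G D v) :
    IsUndefendableAttack (G.map f) (mapUnionCompl f D) (f v) := by
  refine ⟨apply_mem_mapUnionCompl.not.2 h.1, fun u hu hadj => ?_⟩
  obtain ⟨u', v', hadj', rfl, hv'⟩ := (map_adj _ _ _ _).1 hadj
  obtain rfl := f.injective hv'
  rw [insert_erase_mapUnionCompl, isDomSet_map_mapUnionCompl_iff]
  exact h.2 u' (apply_mem_mapUnionCompl.1 hu) hadj'

end IsolatedVertices

instance [Fintype V] [DecidableEq V] (G : SimpleGraph V) [DecidableRel G.Adj] :
    DecidablePred (IsDomSet G) := fun D => by unfold IsDomSet; infer_instance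

instance [Fintype V] [DecidableEq V] (G : SimpleGraph V) [DecidableRel G.Adj] (D : Finset V) :
    DecidablePred (IsUndefendableAttack G D) := fun v => by
  unfold IsUndefendableAttack; infer_instance

def houseGraph : SimpleGraph (Fin 5) :=
  SimpleGraph.fromEdgeSet {s(0, 1), s(0, 4), s(1, 2), s(1, 4), s(2, 3), s(3, 4)}

instance : DecidableRel houseGraph.Adj := fun a b => by unfold houseGraph; infer_instance

def houseFamily : Finset (Finset (Fin 5)) := {{0, 2}, {0, 3}, {1, 2}, {1, 3}, {2, 4}, {3, 4}}

lemma two_le_card_of_isDomSet_houseGraph :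
    ∀ D : Finset (Fin 5), IsDomSet houseGraph D → 2 ≤ D.card := by
  decide

lemma card_of_mem_houseFamily : ∀ D ∈ houseFamily, D.card = 2 := by decide

lemma isEDFamily_houseFamily : IsEDFamily houseGraph ↑houseFamily := by
  have : ∀ D ∈ houseFamily, IsDomSet houseGraph D ∧
      ∀ v ∉ D, ∃ u ∈ D, houseGraph.Adj u v ∧ insert v (D.erase u) ∈ houseFamily := by
    decide
  simpa [IsEDFamily] using this

lemma isUndefendableAttack_houseGraph : IsUndefendableAttack houseGraph {1, 4} 0 := by decide

/-- For every `k ≥ 2` there exists a graph `G` with `γ(G) = γ∞(G) = k` containing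
a minimum dominating set which is not an eternal dominating set. -/
theorem exists_graph_min_dominating_not_eternal (k : ℕ) (hk : 2 ≤ k) :
    ∃ (n : ℕ) (G : SimpleGraph (Fin n)),
      domNum G = k ∧ eternalDomNum G = k ∧
      ∃ D : Finset (Fin n), D.card = k ∧ IsDomSet G D ∧ ¬ IsEternalDomSet G D := by
  let f : Fin 5 ↪ Fin (k + 3) := Fin.castLEEmb (by omega)
  have hcard : ∀ D : Finset (Fin 5), D.card = 2 → (mapUnionCompl f D).card = k := by
    intro D hD
    rw [card_mapUnionCompl, hD, Fintype.card_fin, Fintype.card_fin]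
    omega
  have hk02 := hcard {0, 2} rfl
  have hmin : ∀ D, IsDomSet (houseGraph.map f) D → (mapUnionCompl f {0, 2}).card ≤ D.card := by
    intro D hD
    have := le_card_of_isDomSet_map two_le_card_of_isDomSet_houseGraph hD
    rw [Fintype.card_fin, Fintype.card_fin] at this
    omega
  have hdom : IsDomSet (houseGraph.map f) (mapUnionCompl f {0, 2}) :=
    isDomSet_map_mapUnionCompl_iff.2 (by decide)
  refine ⟨k + 3, houseGraph.map f, ?_, ?_, mapUnionCompl f {1, 4}, hcard _ rfl,
    isDomSet_map_mapUnionCompl_iff.2 (by decide),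
    isUndefendableAttack_houseGraph.map.not_isEternalDomSet⟩
  · exact (domNum_eq_card hdom hmin).trans hk02
  · refine (eternalDomNum_eq_card isEDFamily_houseFamily.image_mapUnionCompl
      (Set.mem_image_of_mem _ (by decide)) ?_ hmin).trans hk02
    rintro _ ⟨D, hD, rfl⟩
    rw [hk02, hcard D (card_of_mem_houseFamily D hD)]
end
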